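/- Let λ > 0, let u ∈ H¹(S¹) be positive, and let α ∈ [0, 2π). Then ∫₀^{2π} cos(θ+α)·(T_λu)(θ)^{-3} dθ = √(λ^{-2}cos²α + λ²sin²α) · ∫₀^{2π} cos(θ+ᾱ)·u(θ)^{-3} dθ, where ᾱ = σ_λ^{-1}(α) is the unique point with σ_λ(ᾱ) = α (mod 2π). -/

import Mathlib

open Real MeasureTheory Set

/-- `u ∈ H¹(S¹)`: `u` is a `2π`-periodic real function on `ℝ` which is absolutely
continuous with (weak) derivative `u'`, and both `u` and `u'` are square-integrable
over a period. -/
def MemH1Circle (u u' : ℝ → ℝ) : Prop :=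
  Function.Periodic u (2 * π) ∧ Function.Periodic u' (2 * π) ∧
  (∀ x : ℝ, u x = u 0 + ∫ t in (0:ℝ)..x, u' t) ∧
  IntervalIntegrable u' volume 0 (2 * π) ∧
  MemLp u 2 (volume.restrict (Icc 0 (2 * π))) ∧
  MemLp u' 2 (volume.restrict (Icc 0 (2 * π)))

/-- `ψ_λ(θ) = √(λ²cos²θ + λ⁻²sin²θ)`. -/
noncomputable def psiL (l : ℝ) : ℝ → ℝ :=
  fun θ => Real.sqrt (l ^ 2 * Real.cos θ ^ 2 + l ^ (-2 : ℤ) * Real.sin θ ^ 2)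

/-- `σ_λ(θ) = ∫₀^θ ψ_λ(t)⁻² dt`. -/
noncomputable def sigmaL (l : ℝ) : ℝ → ℝ :=
  fun θ => ∫ t in (0:ℝ)..θ, (psiL l t) ^ (-2 : ℤ)

/-- `(T_λ u)(θ) = u(σ_λ(θ))·ψ_λ(θ)`. -/
noncomputable def TL (l : ℝ) (u : ℝ → ℝ) : ℝ → ℝ :=
  fun θ => u (sigmaL l θ) * psiL l θ

noncomputable def qf (l θ : ℝ) : ℝ := l^2 * Real.cos θ^2 + (l^2)⁻¹ * Real.sin θ^2

lemma zpow_neg2 (x : ℝ) : x ^ (-2:ℤ) = (x^2)⁻¹ := by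
  rw [zpow_neg]; norm_cast

lemma qf_pos {l : ℝ} (hl : 0 < l) (θ : ℝ) : 0 < qf l θ := by
  have h := Real.sin_sq_add_cos_sq θ
  have h1 : 0 < l^2 := by positivity
  have h2 : (0:ℝ) < (l^2)⁻¹ := by positivity
  unfold qf
  rcases le_total (Real.cos θ^2) (1/2) with hc | hc
  · have hs : 1/2 ≤ Real.sin θ^2 := by linarith
    nlinarith [mul_nonneg h1.le (sq_nonneg (Real.cos θ))]
  · nlinarith [mul_nonneg h2.le (sq_nonneg (Real.sin θ))]

lemma psiL_eq (l θ : ℝ) : psiL l θ = Real.sqrt (qf l θ) := by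
  unfold psiL qf; rw [zpow_neg2]

lemma psiL_pos {l : ℝ} (hl : 0 < l) (θ : ℝ) : 0 < psiL l θ := by
  rw [psiL_eq]; exact Real.sqrt_pos.2 (qf_pos hl θ)

lemma psiL_sq {l : ℝ} (hl : 0 < l) (θ : ℝ) : psiL l θ ^ 2 = qf l θ := by
  rw [psiL_eq, Real.sq_sqrt (qf_pos hl θ).le]

lemma continuous_qf (l : ℝ) : Continuous (qf l) := by
  unfold qf; fun_prop

lemma continuous_qfinv {l : ℝ} (hl : 0 < l) : Continuous fun θ => (qf l θ)⁻¹ :=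
  (continuous_qf l).inv₀ fun θ => (qf_pos hl θ).ne'

lemma sigmaL_eq {l : ℝ} (hl : 0 < l) : sigmaL l = fun θ => ∫ t in (0:ℝ)..θ, (qf l t)⁻¹ := by
  funext θ; unfold sigmaL
  simp only [zpow_neg2, psiL_sq hl]

lemma hasDerivAt_sigmaL {l : ℝ} (hl : 0 < l) (θ : ℝ) :
    HasDerivAt (sigmaL l) ((qf l θ)⁻¹) θ := by
  rw [sigmaL_eq hl]
  exact ((continuous_qfinv hl).integral_hasStrictDerivAt 0 θ).hasDerivAt

lemma continuous_sigmaL {l : ℝ} (hl : 0 < l) : Continuous (sigmaL l) :=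
  continuous_iff_continuousAt.2 fun θ => (hasDerivAt_sigmaL hl θ).continuousAt

lemma sigmaL_zero {l : ℝ} : sigmaL l 0 = 0 := by
  unfold sigmaL; simp

noncomputable def qd (l θ : ℝ) : ℝ := 2 * Real.sin θ * Real.cos θ * ((l^2)⁻¹ - l^2)

lemma hasDerivAt_qf (l θ : ℝ) : HasDerivAt (qf l) (qd l θ) θ := by
  have h1 := ((Real.hasDerivAt_cos θ).pow 2).const_mul (l^2)
  have h2 := ((Real.hasDerivAt_sin θ).pow 2).const_mul ((l^2)⁻¹)
  have := h1.add h2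
  refine this.congr_deriv (Eq.symm ?_)
  unfold qd; push_cast; ring

noncomputable def Ff (l θ : ℝ) : ℝ :=
  l * Real.cos θ * Real.sin (sigmaL l θ) - l⁻¹ * Real.sin θ * Real.cos (sigmaL l θ)
noncomputable def Hf (l θ : ℝ) : ℝ :=
  l * Real.cos θ * Real.cos (sigmaL l θ) + l⁻¹ * Real.sin θ * Real.sin (sigmaL l θ)

lemma hasDerivAt_Ff {l : ℝ} (hl : 0 < l) (θ : ℝ) :
    HasDerivAt (Ff l)
      ((l * (-Real.sin θ)) * Real.sin (sigmaL l θ)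
        + (l * Real.cos θ) * (Real.cos (sigmaL l θ) * (qf l θ)⁻¹)
        - ((l⁻¹ * Real.cos θ) * Real.cos (sigmaL l θ)
        + (l⁻¹ * Real.sin θ) * (-Real.sin (sigmaL l θ) * (qf l θ)⁻¹))) θ := by
  have hc : HasDerivAt (fun θ => l * Real.cos θ) (l * (-Real.sin θ)) θ :=
    (Real.hasDerivAt_cos θ).const_mul l
  have hs : HasDerivAt (fun θ => l⁻¹ * Real.sin θ) (l⁻¹ * Real.cos θ) θ :=
    (Real.hasDerivAt_sin θ).const_mul l⁻¹
  have hS : HasDerivAt (fun θ => Real.sin (sigmaL l θ))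
      (Real.cos (sigmaL l θ) * (qf l θ)⁻¹) θ := (hasDerivAt_sigmaL hl θ).sin
  have hC : HasDerivAt (fun θ => Real.cos (sigmaL l θ))
      (-Real.sin (sigmaL l θ) * (qf l θ)⁻¹) θ := (hasDerivAt_sigmaL hl θ).cos
  exact (hc.mul hS).sub (hs.mul hC)

lemma hasDerivAt_Hf {l : ℝ} (hl : 0 < l) (θ : ℝ) :
    HasDerivAt (Hf l)
      ((l * (-Real.sin θ)) * Real.cos (sigmaL l θ)
        + (l * Real.cos θ) * (-Real.sin (sigmaL l θ) * (qf l θ)⁻¹)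
        + ((l⁻¹ * Real.cos θ) * Real.sin (sigmaL l θ)
        + (l⁻¹ * Real.sin θ) * (Real.cos (sigmaL l θ) * (qf l θ)⁻¹))) θ := by
  have hc : HasDerivAt (fun θ => l * Real.cos θ) (l * (-Real.sin θ)) θ :=
    (Real.hasDerivAt_cos θ).const_mul l
  have hs : HasDerivAt (fun θ => l⁻¹ * Real.sin θ) (l⁻¹ * Real.cos θ) θ :=
    (Real.hasDerivAt_sin θ).const_mul l⁻¹
  have hS : HasDerivAt (fun θ => Real.sin (sigmaL l θ))
      (Real.cos (sigmaL l θ) * (qf l θ)⁻¹) θ := (hasDerivAt_sigmaL hl θ).sin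
  have hC : HasDerivAt (fun θ => Real.cos (sigmaL l θ))
      (-Real.sin (sigmaL l θ) * (qf l θ)⁻¹) θ := (hasDerivAt_sigmaL hl θ).cos
  exact (hc.mul hC).add (hs.mul hS)

lemma Ff_deriv_zero {l : ℝ} (hl : 0 < l) (θ : ℝ) :
    HasDerivAt (fun θ => (Ff l θ)^2 / qf l θ) 0 θ := by
  have hQ := (qf_pos hl θ).ne'
  have hdiv := ((hasDerivAt_Ff hl θ).pow 2).div (hasDerivAt_qf l θ) hQ
  refine hdiv.congr_deriv (Eq.symm ?_)
  rw [eq_comm, div_eq_zero_iff]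
  left
  have hl' : l ≠ 0 := hl.ne'
  have hsc := Real.sin_sq_add_cos_sq θ
  have hQ2 : l^2*Real.cos θ^2 + (l^2)⁻¹*Real.sin θ^2 ≠ 0 := hQ
  have hQ3 : l ^ 2 * Real.cos θ ^ 2 * l ^ 2 + Real.sin θ ^ 2 ≠ 0 := by
    intro h
    apply hQ2
    have hl2 : (l^2 : ℝ) ≠ 0 := by positivity
    field_simp
    linear_combination h
  simp only [Pi.pow_apply]
  unfold Ff qf qd
  have hab : l * l⁻¹ = 1 := mul_inv_cancel₀ hl'
  have hq : (l ^ 2 * Real.cos θ ^ 2 + (l ^ 2)⁻¹ * Real.sin θ ^ 2) * (l ^ 2 * Real.cos θ ^ 2 + (l ^ 2)⁻¹ * Real.sin θ ^ 2)⁻¹ = 1 := mul_inv_cancel₀ hQ2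
  linear_combination (l * Real.cos θ * Real.sin (sigmaL l θ) - l⁻¹ * Real.sin θ * Real.cos (sigmaL l θ)) * (2 * (l * Real.cos θ * Real.cos (sigmaL l θ) + l⁻¹ * Real.sin θ * Real.sin (sigmaL l θ)) * hq + Real.sin (sigmaL l θ) * (-2*l*(l⁻¹)^2*Real.sin θ*hsc - 2*l⁻¹*Real.sin θ*hab) + Real.cos (sigmaL l θ) * (-2*l^2*l⁻¹*Real.cos θ*hsc - 2*l*Real.cos θ*hab))

lemma Hf_deriv_zero {l : ℝ} (hl : 0 < l) (θ : ℝ) :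
    HasDerivAt (fun θ => (Hf l θ)^2 / qf l θ) 0 θ := by
  have hQ := (qf_pos hl θ).ne'
  have hdiv := ((hasDerivAt_Hf hl θ).pow 2).div (hasDerivAt_qf l θ) hQ
  refine hdiv.congr_deriv (Eq.symm ?_)
  rw [eq_comm, div_eq_zero_iff]
  left
  have hl' : l ≠ 0 := hl.ne'
  have hsc := Real.sin_sq_add_cos_sq θ
  have hQ2 : l^2*Real.cos θ^2 + (l^2)⁻¹*Real.sin θ^2 ≠ 0 := hQ
  have hQ3 : l ^ 2 * Real.cos θ ^ 2 * l ^ 2 + Real.sin θ ^ 2 ≠ 0 := by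
    intro h
    apply hQ2
    have hl2 : (l^2 : ℝ) ≠ 0 := by positivity
    field_simp
    linear_combination h
  simp only [Pi.pow_apply]
  unfold Hf qf qd
  have hab : l * l⁻¹ = 1 := mul_inv_cancel₀ hl'
  have hq : (l ^ 2 * Real.cos θ ^ 2 + (l ^ 2)⁻¹ * Real.sin θ ^ 2) * (l ^ 2 * Real.cos θ ^ 2 + (l ^ 2)⁻¹ * Real.sin θ ^ 2)⁻¹ = 1 := mul_inv_cancel₀ hQ2
  linear_combination (l * Real.cos θ * Real.cos (sigmaL l θ) + l⁻¹ * Real.sin θ * Real.sin (sigmaL l θ)) * (-2 * (l * Real.cos θ * Real.sin (sigmaL l θ) - l⁻¹ * Real.sin θ * Real.cos (sigmaL l θ)) * hq + Real.sin (sigmaL l θ) * (2*l^2*l⁻¹*Real.cos θ*hsc + 2*l*Real.cos θ*hab) + Real.cos (sigmaL l θ) * (-2*l*(l⁻¹)^2*Real.sin θ*hsc - 2*l⁻¹*Real.sin θ*hab))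

lemma Ff_eq_zero {l : ℝ} (hl : 0 < l) (θ : ℝ) : Ff l θ = 0 := by
  have hconst := is_const_of_deriv_eq_zero
    (f := fun θ => (Ff l θ)^2 / qf l θ)
    (fun x => (Ff_deriv_zero hl x).differentiableAt)
    (fun x => (Ff_deriv_zero hl x).deriv) θ 0
  have h0 : Ff l 0 = 0 := by unfold Ff; rw [sigmaL_zero]; simp
  rw [h0] at hconst
  have hz : (0:ℝ)^2 / qf l 0 = 0 := by simp
  rw [hz] at hconst
  have h2 : (Ff l θ)^2 = 0 :=
    (div_eq_zero_iff.1 hconst).resolve_right (qf_pos hl θ).ne'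
  exact pow_eq_zero_iff (by norm_num) |>.1 h2

lemma continuous_Hf {l : ℝ} (hl : 0 < l) : Continuous (Hf l) := by
  unfold Hf
  have hσ := continuous_sigmaL hl
  exact ((continuous_const.mul Real.continuous_cos).mul (Real.continuous_cos.comp hσ)).add
    ((continuous_const.mul Real.continuous_sin).mul (Real.continuous_sin.comp hσ))

lemma Hf_eq_psiL {l : ℝ} (hl : 0 < l) (θ : ℝ) : Hf l θ = psiL l θ := by
  have hconst := is_const_of_deriv_eq_zero
    (f := fun θ => (Hf l θ)^2 / qf l θ)
    (fun x => (Hf_deriv_zero hl x).differentiableAt)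
    (fun x => (Hf_deriv_zero hl x).deriv) θ 0
  have h0 : Hf l 0 = l := by unfold Hf; rw [sigmaL_zero]; simp
  have hq0 : qf l 0 = l^2 := by unfold qf; simp
  rw [h0, hq0] at hconst
  have hl2 : (l:ℝ)^2 ≠ 0 := by positivity
  rw [div_self hl2] at hconst
  have hsq : (Hf l θ)^2 = qf l θ := by
    have hQ := (qf_pos hl θ).ne'
    field_simp at hconst
    exact hconst
  -- Hf is everywhere nonzero, continuous, and positive at 0, hence positive
  have hne : ∀ x, Hf l x ≠ 0 := by
    intro x hx
    have hsqx : (Hf l x)^2 = qf l x := by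
      have hconstx := is_const_of_deriv_eq_zero
        (f := fun θ => (Hf l θ)^2 / qf l θ)
        (fun y => (Hf_deriv_zero hl y).differentiableAt)
        (fun y => (Hf_deriv_zero hl y).deriv) x 0
      rw [h0, hq0, div_self hl2] at hconstx
      have hQ := (qf_pos hl x).ne'
      field_simp at hconstx
      exact hconstx
    rw [hx] at hsqx
    exact (qf_pos hl x).ne' (by simpa using hsqx.symm)
  have hpos : 0 < Hf l θ := by
    rcases lt_or_ge 0 (Hf l θ) with h | h
    · exact h
    · exfalso
      have h0pos : 0 < Hf l 0 := by rw [h0]; exact hl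
      have : (0:ℝ) ∈ uIcc (Hf l 0) (Hf l θ) := by
        rw [mem_uIcc]; right; exact ⟨h, h0pos.le⟩
      obtain ⟨x, _, hx⟩ := intermediate_value_uIcc (continuous_Hf hl).continuousOn this
      exact hne x hx
  calc Hf l θ = Real.sqrt ((Hf l θ)^2) := (Real.sqrt_sq hpos.le).symm
  _ = Real.sqrt (qf l θ) := by rw [hsq]
  _ = psiL l θ := (psiL_eq l θ).symm

lemma psi_cos {l : ℝ} (hl : 0 < l) (θ : ℝ) :
    psiL l θ * Real.cos (sigmaL l θ) = l * Real.cos θ := by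
  have hsc2 := Real.sin_sq_add_cos_sq (sigmaL l θ)
  have h1 : psiL l θ * Real.cos (sigmaL l θ)
      = Hf l θ * Real.cos (sigmaL l θ) + Ff l θ * Real.sin (sigmaL l θ) := by
    rw [Hf_eq_psiL hl, Ff_eq_zero hl]; ring
  rw [h1]; unfold Hf Ff
  linear_combination (l * Real.cos θ) * hsc2

lemma psi_sin {l : ℝ} (hl : 0 < l) (θ : ℝ) :
    psiL l θ * Real.sin (sigmaL l θ) = l⁻¹ * Real.sin θ := by
  have hsc2 := Real.sin_sq_add_cos_sq (sigmaL l θ)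
  have h1 : psiL l θ * Real.sin (sigmaL l θ)
      = Hf l θ * Real.sin (sigmaL l θ) - Ff l θ * Real.cos (sigmaL l θ) := by
    rw [Hf_eq_psiL hl, Ff_eq_zero hl]; ring
  rw [h1]; unfold Hf Ff
  linear_combination (l⁻¹ * Real.sin θ) * hsc2

lemma cos_diff_pos {l : ℝ} (hl : 0 < l) (θ : ℝ) :
    0 < Real.cos (sigmaL l θ - θ) := by
  have hψ := psiL_pos hl θ
  have key : psiL l θ * Real.cos (sigmaL l θ - θ)
      = l * Real.cos θ ^ 2 + l⁻¹ * Real.sin θ ^ 2 := by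
    rw [Real.cos_sub]
    have h1 := psi_cos hl θ
    have h2 := psi_sin hl θ
    linear_combination (Real.cos θ) * h1 + (Real.sin θ) * h2
  have hil : 0 < l⁻¹ := by positivity
  have hsc := Real.sin_sq_add_cos_sq θ
  have hpos : 0 < l * Real.cos θ ^ 2 + l⁻¹ * Real.sin θ ^ 2 := by
    rcases le_total (Real.cos θ^2) (1/2) with hc | hc
    · have hs : 1/2 ≤ Real.sin θ^2 := by linarith
      nlinarith [mul_nonneg hl.le (sq_nonneg (Real.cos θ))]
    · nlinarith [mul_nonneg hil.le (sq_nonneg (Real.sin θ))]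
  nlinarith [key]

lemma sigmaL_two_pi {l : ℝ} (hl : 0 < l) : sigmaL l (2 * π) = 2 * π := by
  have hπ := Real.pi_pos
  have hg : Continuous (fun θ => sigmaL l θ - θ) := (continuous_sigmaL hl).sub continuous_id
  have hg0 : sigmaL l 0 - 0 = 0 := by rw [sigmaL_zero]; ring
  -- |σ(2π) - 2π| < π/2
  have habs : |sigmaL l (2 * π) - 2 * π| < π / 2 := by
    by_contra hcon
    push_neg at hcon
    rcases le_abs.1 hcon with h | h
    · -- π/2 ≤ σ(2π) - 2π : IVT gives point where the difference is π/2
      have hsub := intermediate_value_Icc (by linarith : (0:ℝ) ≤ 2 * π)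
        (hg.continuousOn (s := Icc 0 (2*π)))
      have hmem : π / 2 ∈ Icc (sigmaL l 0 - 0) (sigmaL l (2*π) - 2*π) := by
        rw [hg0]; exact ⟨by linarith, h⟩
      obtain ⟨x, _, hx⟩ := hsub hmem
      have hx' : sigmaL l x - x = π / 2 := hx
      have := cos_diff_pos hl x
      rw [hx', Real.cos_pi_div_two] at this
      exact lt_irrefl 0 this
    · have hsub := intermediate_value_Icc' (by linarith : (0:ℝ) ≤ 2 * π)
        (hg.continuousOn (s := Icc 0 (2*π)))
      have hmem : -(π / 2) ∈ Icc (sigmaL l (2*π) - 2*π) (sigmaL l 0 - 0) := by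
        rw [hg0]; constructor
        · linarith
        · linarith
      obtain ⟨x, _, hx⟩ := hsub hmem
      have hx' : sigmaL l x - x = -(π / 2) := hx
      have := cos_diff_pos hl x
      rw [hx', Real.cos_neg, Real.cos_pi_div_two] at this
      exact lt_irrefl 0 this
  -- cos(σ(2π) - 2π) = 1
  have hψ2π : psiL l (2 * π) = l := by
    rw [psiL_eq]
    unfold qf
    rw [Real.cos_two_pi, Real.sin_two_pi]
    simp
    rw [Real.sqrt_sq hl.le]
  have hψpos := psiL_pos hl (2 * π)
  have hcosσ : Real.cos (sigmaL l (2 * π)) = 1 := by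
    have := psi_cos hl (2 * π)
    rw [hψ2π, Real.cos_two_pi, mul_one] at this
    field_simp at this
    exact this
  have hsinσ : Real.sin (sigmaL l (2 * π)) = 0 := by
    have := psi_sin hl (2 * π)
    rw [hψ2π, Real.sin_two_pi, mul_zero] at this
    rcases mul_eq_zero.1 this with h | h
    · exact absurd h hl.ne'
    · exact h
  have hcos1 : Real.cos (sigmaL l (2 * π) - 2 * π) = 1 := by
    rw [Real.cos_sub, hcosσ, hsinσ, Real.cos_two_pi, Real.sin_two_pi]
    ring
  have h1 : -(2 * π) < sigmaL l (2 * π) - 2 * π := by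
    have := abs_lt.1 habs; linarith [this.1]
  have h2 : sigmaL l (2 * π) - 2 * π < 2 * π := by
    have := abs_lt.1 habs; linarith [this.2]
  have := (Real.cos_eq_one_iff_of_lt_of_lt h1 h2).1 hcos1
  linarith

lemma strictMono_sigmaL {l : ℝ} (hl : 0 < l) : StrictMono (sigmaL l) := by
  apply strictMono_of_deriv_pos
  intro x
  rw [(hasDerivAt_sigmaL hl x).deriv]
  exact inv_pos.2 (qf_pos hl x)

lemma aux_ne {l : ℝ} (hl : 0 < l) (θ : ℝ) :
    l ^ 2 * Real.cos θ ^ 2 * l ^ 2 + Real.sin θ ^ 2 ≠ 0 := by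
  have h := qf_pos hl θ
  have hl2 : (0:ℝ) < l^2 := by positivity
  have he : l ^ 2 * Real.cos θ ^ 2 * l ^ 2 + Real.sin θ ^ 2 = (qf l θ) * l^2 := by
    unfold qf; field_simp
  rw [he]; exact (mul_pos h hl2).ne'


/-- Identity (4.4) of the paper: the behaviour of the constraint
`∫ cos(θ+α)·u⁻³ dθ` under `T_λ`, where `ᾱ = σ_λ⁻¹(α)`. -/
theorem TL_constraint_transform (l : ℝ) (hl : 0 < l)
    (u u' : ℝ → ℝ) (hu : MemH1Circle u u') (hupos : ∀ θ, 0 < u θ)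
    (α ᾱ : ℝ) (hα : α ∈ Ico (0:ℝ) (2 * π)) (hᾱmem : ᾱ ∈ Ico (0:ℝ) (2 * π))
    (hᾱ : sigmaL l ᾱ = α) :
    (∫ θ in (0:ℝ)..(2 * π), Real.cos (θ + α) * (TL l u θ) ^ (-3 : ℤ)) =
      Real.sqrt (l ^ (-2 : ℤ) * Real.cos α ^ 2 + l ^ 2 * Real.sin α ^ 2) *
        ∫ θ in (0:ℝ)..(2 * π), Real.cos (θ + ᾱ) * (u θ) ^ (-3 : ℤ) := by
  obtain ⟨hup, hu'p, hrep, hint, _, _⟩ := hu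
  have hπ := Real.pi_pos
  have hl' : l ≠ 0 := hl.ne'
  have hψᾱ := psiL_pos hl ᾱ
  have hcosα : psiL l ᾱ * Real.cos α = l * Real.cos ᾱ := by
    rw [← hᾱ]; exact psi_cos hl ᾱ
  have hsinα : psiL l ᾱ * Real.sin α = l⁻¹ * Real.sin ᾱ := by
    rw [← hᾱ]; exact psi_sin hl ᾱ
  -- the square root equals (psiL l ᾱ)⁻¹
  have hsqrt : Real.sqrt (l ^ (-2 : ℤ) * Real.cos α ^ 2 + l ^ 2 * Real.sin α ^ 2)
      = (psiL l ᾱ)⁻¹ := by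
    have hq : psiL l ᾱ^2 = l^2*Real.cos ᾱ^2 + (l^2)⁻¹*Real.sin ᾱ^2 := psiL_sq hl ᾱ
    have hψne := hψᾱ.ne'
    have hc : Real.cos α = l * Real.cos ᾱ / psiL l ᾱ := by
      field_simp; linear_combination hcosα
    have hll : l * l⁻¹ = 1 := mul_inv_cancel₀ hl'
    have hs : Real.sin α = l⁻¹ * Real.sin ᾱ / psiL l ᾱ := by
      field_simp; linear_combination l * hsinα + Real.sin ᾱ * hll
    have hval : l ^ (-2 : ℤ) * Real.cos α ^ 2 + l ^ 2 * Real.sin α ^ 2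
        = (psiL l ᾱ^2)⁻¹ := by
      rw [zpow_neg2, hc, hs, hq]
      have h := Real.sin_sq_add_cos_sq ᾱ
      have hq2 : l^2 * psiL l ᾱ^2 = l^4*Real.cos ᾱ^2 + Real.sin ᾱ^2 := by
        rw [hq]; field_simp
      rw [← hq]
      field_simp
      linear_combination h
    rw [hval, Real.sqrt_inv, Real.sqrt_sq hψᾱ.le]
  have z3 : ∀ x : ℝ, x ^ (-3:ℤ) = (x^3)⁻¹ := by
    intro x; rw [zpow_neg]; norm_cast
  have hpoint : ∀ θ, Real.cos (θ + α) * (TL l u θ) ^ (-3:ℤ)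
      = (psiL l ᾱ)⁻¹ * ((qf l θ)⁻¹ *
          (Real.cos (sigmaL l θ + ᾱ) * (u (sigmaL l θ)) ^ (-3:ℤ))) := by
    intro θ
    have hψθ := psiL_pos hl θ
    have huσ := hupos (sigmaL l θ)
    have hA := psi_cos hl θ
    have hB := psi_sin hl θ
    have hqθ : qf l θ = psiL l θ^2 := (psiL_sq hl θ).symm
    show Real.cos (θ + α) * (u (sigmaL l θ) * psiL l θ) ^ (-3:ℤ) = _
    rw [Real.cos_add, Real.cos_add, hqθ, z3, z3]
    field_simp
    linear_combination (Real.cos θ) * hcosα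
      - (Real.sin θ) * hsinα
      - (Real.cos ᾱ) * hA
      + (Real.sin ᾱ) * hB
  -- continuity of u on [0, 2π]
  have hprim := intervalIntegral.continuousOn_primitive_interval' hint left_mem_uIcc
  have hucont : ContinuousOn u (uIcc (0:ℝ) (2*π)) :=
    (continuousOn_const.add hprim).congr (fun x _ => hrep x)
  have himg : sigmaL l '' (uIcc (0:ℝ) (2*π)) ⊆ uIcc (0:ℝ) (2*π) := by
    rintro _ ⟨x, hx, rfl⟩
    rw [uIcc_of_le (by linarith)] at hx ⊢
    have hmono := (strictMono_sigmaL hl).monotone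
    constructor
    · have := hmono hx.1; rwa [sigmaL_zero] at this
    · have := hmono hx.2; rwa [sigmaL_two_pi hl] at this
  have hgcont : ContinuousOn (fun φ => Real.cos (φ + ᾱ) * (u φ)^(-3:ℤ))
      (sigmaL l '' (uIcc (0:ℝ) (2*π))) := by
    apply ContinuousOn.mono _ himg
    apply ContinuousOn.mul
    · exact (Real.continuous_cos.comp (continuous_id.add continuous_const)).continuousOn
    · exact hucont.zpow₀ _ (fun x _ => Or.inl (hupos x).ne')
  have hsub := intervalIntegral.integral_comp_smul_deriv'
    (fun x (_ : x ∈ uIcc (0:ℝ) (2*π)) => hasDerivAt_sigmaL hl x)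
    (continuous_qfinv hl).continuousOn hgcont
  rw [sigmaL_zero, sigmaL_two_pi hl] at hsub
  calc (∫ θ in (0:ℝ)..(2*π), Real.cos (θ + α) * (TL l u θ) ^ (-3:ℤ))
      = ∫ θ in (0:ℝ)..(2*π), (psiL l ᾱ)⁻¹ * ((qf l θ)⁻¹ *
          (Real.cos (sigmaL l θ + ᾱ) * (u (sigmaL l θ)) ^ (-3:ℤ))) :=
        intervalIntegral.integral_congr (fun x _ => hpoint x)
    _ = (psiL l ᾱ)⁻¹ * ∫ θ in (0:ℝ)..(2*π), (qf l θ)⁻¹ *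
          (Real.cos (sigmaL l θ + ᾱ) * (u (sigmaL l θ)) ^ (-3:ℤ)) :=
        intervalIntegral.integral_const_mul _ _
    _ = (psiL l ᾱ)⁻¹ * ∫ θ in (0:ℝ)..(2*π), Real.cos (θ + ᾱ) * (u θ) ^ (-3:ℤ) := by
        rw [← hsub]
        rfl
    _ = Real.sqrt (l ^ (-2 : ℤ) * Real.cos α ^ 2 + l ^ 2 * Real.sin α ^ 2) *
          ∫ θ in (0:ℝ)..(2*π), Real.cos (θ + ᾱ) * (u θ) ^ (-3:ℤ) := by rw [hsqrt]
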